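/- Let G = [f₁, f₂, …] be a transcendental semigroup which is bounded on some curve Γ going to ∞, i.e., there is a curve Γ ⊂ ℂ tending to ∞ on which every generator fᵢ of G is bounded. Then every connected component of F(G) is simply connected. -/

import Mathlib

open Set Filter Topology

noncomputable section

/-- A transcendental entire function: entire (differentiable on all of `ℂ`)
and not a polynomial. -/
def TranscendentalEntire (f : ℂ → ℂ) : Prop :=
  Differentiable ℂ f ∧ ¬ ∃ p : Polynomial ℂ, ∀ z, f z = p.eval z

/-- A family `𝓕` of entire functions is normal on a set `U`: every sequence in `𝓕`
has a subsequence which either converges locally uniformly on `U` (to a holomorphic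
limit), or diverges locally uniformly to `∞` on `U` (i.e. converges to the constant
`∞` locally uniformly with respect to the spherical metric). -/
def NormalOn (F : Set (ℂ → ℂ)) (U : Set ℂ) : Prop :=
  ∀ s : ℕ → ℂ → ℂ, (∀ n, s n ∈ F) →
    ∃ φ : ℕ → ℕ, StrictMono φ ∧
      ((∃ h : ℂ → ℂ, TendstoLocallyUniformlyOn (fun n => s (φ n)) h atTop U) ∨
        (∀ K, K ⊆ U → IsCompact K → ∀ M : ℝ,
          ∀ᶠ n in atTop, ∀ z ∈ K, M ≤ ‖s (φ n) z‖))

/-- The Fatou set of a family of entire functions: the largest open subset of `ℂ`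
on which the family is normal. -/
def fatou (F : Set (ℂ → ℂ)) : Set ℂ :=
  {z | ∃ U : Set ℂ, IsOpen U ∧ z ∈ U ∧ NormalOn F U}

/-- The classical Fatou set of a single entire function: the Fatou set of the
family of its iterates. -/
def fatouFn (f : ℂ → ℂ) : Set ℂ :=
  fatou {g | ∃ n : ℕ, 0 < n ∧ g = f^[n]}

/-- `G` is a transcendental semigroup: a nonempty set of transcendental entire
functions closed under composition. -/
def IsTransSemigroup (G : Set (ℂ → ℂ)) : Prop :=
  G.Nonempty ∧ (∀ f ∈ G, ∀ g ∈ G, f ∘ g ∈ G) ∧ ∀ f ∈ G, TranscendentalEntire f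

/-- Membership in the semigroup (under composition) generated by `S`. -/
inductive InSemigroup (S : Set (ℂ → ℂ)) : (ℂ → ℂ) → Prop
  | base {f : ℂ → ℂ} : f ∈ S → InSemigroup S f
  | comp {f g : ℂ → ℂ} : InSemigroup S f → InSemigroup S g → InSemigroup S (f ∘ g)

/-- The semigroup (under composition) generated by `S`. -/
def semigroupGen (S : Set (ℂ → ℂ)) : Set (ℂ → ℂ) := {f | InSemigroup S f}

/-- `U` is a connected component of `S`. -/
def IsComponentOf (U S : Set ℂ) : Prop := ∃ z ∈ S, U = connectedComponentIn S z

/-- A plane domain is simply connected iff its complement in the Riemann sphere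
(the one-point compactification of `ℂ`) is connected. -/
def SimplyConnectedDomain (U : Set ℂ) : Prop :=
  IsConnected ((fun z : ℂ => (z : OnePoint ℂ)) '' U)ᶜ

/-- A multiply connected domain: not simply connected. -/
def MultiplyConnectedDomain (U : Set ℂ) : Prop := ¬ SimplyConnectedDomain U

/-- A plane domain is doubly connected iff its complement in the Riemann sphere
has exactly two connected components. -/
def DoublyConnectedDomain (U : Set ℂ) : Prop :=
  ∃ x ∈ ((fun z : ℂ => (z : OnePoint ℂ)) '' U)ᶜ,
    ∃ y ∈ ((fun z : ℂ => (z : OnePoint ℂ)) '' U)ᶜ,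
      connectedComponentIn (((fun z : ℂ => (z : OnePoint ℂ)) '' U)ᶜ) x ≠
        connectedComponentIn (((fun z : ℂ => (z : OnePoint ℂ)) '' U)ᶜ) y ∧
      ∀ z ∈ ((fun z : ℂ => (z : OnePoint ℂ)) '' U)ᶜ,
        connectedComponentIn (((fun z : ℂ => (z : OnePoint ℂ)) '' U)ᶜ) z =
            connectedComponentIn (((fun z : ℂ => (z : OnePoint ℂ)) '' U)ᶜ) x ∨
          connectedComponentIn (((fun z : ℂ => (z : OnePoint ℂ)) '' U)ᶜ) z =
            connectedComponentIn (((fun z : ℂ => (z : OnePoint ℂ)) '' U)ᶜ) y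

/-- The subsemigroup `Γ̃_U` of `G`: the subsemigroup generated by those `g ∈ G`
such that the classical Fatou set `F(g)` has a multiply connected component
containing `U`. -/
def tildeGamma (G : Set (ℂ → ℂ)) (U : Set ℂ) : Set (ℂ → ℂ) :=
  semigroupGen {g | g ∈ G ∧ ∃ V, IsComponentOf V (fatouFn g) ∧
    MultiplyConnectedDomain V ∧ U ⊆ V}

/-- `w` is a critical value of `f`: the image of a point where `f'` vanishes. -/
def CriticalValue (f : ℂ → ℂ) (w : ℂ) : Prop := ∃ z, deriv f z = 0 ∧ f z = w

/-- `w` is an asymptotic value of `f`: there is a curve going to `∞` along which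
`f` tends to `w`. -/
def AsymptoticValue (f : ℂ → ℂ) (w : ℂ) : Prop :=
  ∃ γ : ℝ → ℂ, ContinuousOn γ (Ici 0) ∧
    Tendsto (fun t => ‖γ t‖) atTop atTop ∧
    Tendsto (fun t => f (γ t)) atTop (nhds w)

/-- The set `Sing(f⁻¹)` of singular values of `f`: critical values together with
asymptotic values. -/
def SingInv (f : ℂ → ℂ) : Set ℂ := {w | CriticalValue f w ∨ AsymptoticValue f w}

/-- `f` is of bounded type (class `𝔅`): transcendental entire and `Sing(f⁻¹)` is bounded. -/
def BoundedType (f : ℂ → ℂ) : Prop :=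
  TranscendentalEntire f ∧ Bornology.IsBounded (SingInv f)

/-- `f` is of finite type: transcendental entire and `Sing(f⁻¹)` is finite. -/
def FiniteType (f : ℂ → ℂ) : Prop :=
  TranscendentalEntire f ∧ (SingInv f).Finite

/-- The stabilizer `G_U` of a component `U` of `F(G)`: those `g ∈ G` for which the
component `U_g` of `F(G)` containing `g(U)` is `U` itself. -/
def stab (G : Set (ℂ → ℂ)) (U : Set ℂ) : Set (ℂ → ℂ) :=
  {g | g ∈ G ∧ ∃ z ∈ U, connectedComponentIn (fatou G) (g z) = U}


/-!
Let `V` be a component of `F(G)` and suppose a component of `ℂ \ V` is bounded. By the Šura-Bura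
theorem it is enclosed by a bounded open set `O` with `∂O ⊆ V`; we show that `G` is normal on `O`,
so `O` lies in `F(G)` and, being attached to `V` along `∂O`, in `V` itself: a contradiction.

Normality on `O`: on the connected set `V ⊇ ∂O` a sequence in `G` either has a subsequence
converging uniformly on `∂O`, hence on `closure O` by the maximum principle, or diverges uniformly
on `∂O`. In the second case the sequence eventually has no zeros in `closure O` (this is where the
curve `Γ` enters), so by the minimum principle it diverges on `O` as well.
-/

open Metric Bornology
open scoped OnePoint

lemma TranscendentalEntire.not_isBounded_range {g : ℂ → ℂ} (hg : TranscendentalEntire g) :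
    ¬ IsBounded (range g) := fun hb => by
  obtain ⟨c, hc⟩ := hg.1.exists_const_forall_eq_of_bounded hb
  exact hg.2 ⟨Polynomial.C c, fun z => by simp [hc z]⟩

lemma TranscendentalEntire.isOpenMap {g : ℂ → ℂ} (hg : TranscendentalEntire g) : IsOpenMap g :=
  (hg.1.differentiableOn.analyticOnNhd isOpen_univ).is_constant_or_isOpenMap.resolve_left
    fun ⟨c, hc⟩ => hg.2 ⟨Polynomial.C c, fun z => by simp [hc z]⟩

lemma differentiable_and_isOpenMap_of_mem_semigroupGen {S : Set (ℂ → ℂ)}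
    (hS : ∀ g ∈ S, TranscendentalEntire g) {g : ℂ → ℂ} (hg : g ∈ semigroupGen S) :
    Differentiable ℂ g ∧ IsOpenMap g := by
  induction hg with
  | base h => exact ⟨(hS _ h).1, (hS _ h).isOpenMap⟩
  | comp _ _ ihf ihg => exact ⟨ihf.1.comp ihg.1, ihf.2.comp ihg.2⟩

section Topology

variable {X : Type*} [TopologicalSpace X]

lemma IsPreconnected.inter_frontier_nonempty {s A : Set X} (hs : IsPreconnected s)
    (hA : IsClosed A) (hsA : (s ∩ A).Nonempty) (hsA' : ¬ s ⊆ A) :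
    (s ∩ frontier A).Nonempty := by
  by_contra hfr
  have hint : s ∩ A ⊆ interior A := fun y ⟨hys, hyA⟩ => by
    by_contra hy
    exact hfr ⟨y, hys, hA.frontier_eq ▸ ⟨hyA, hy⟩⟩
  refine hsA' ((hs.subset_of_closure_inter_subset isOpen_interior ?_ ?_).trans interior_subset)
  · obtain ⟨y, hy⟩ := hsA
    exact ⟨y, hy.1, hint hy⟩
  · intro y ⟨hyc, hys⟩
    exact hint ⟨hys, hA.closure_subset (closure_mono interior_subset hyc)⟩

lemma IsOpenMap.frontier_image_subset {Y : Type*} [TopologicalSpace Y] [T2Space Y]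
    {g : X → Y} (hgo : IsOpenMap g) (hgc : Continuous g) {K : Set X} (hK : IsCompact K) :
    frontier (g '' K) ⊆ g '' frontier K := by
  rintro y ⟨hyc, hyi⟩
  obtain ⟨z, hzK, rfl⟩ := (hK.image hgc).isClosed.closure_subset hyc
  refine ⟨z, ⟨subset_closure hzK, fun hz => hyi ?_⟩, rfl⟩
  exact interior_maximal (image_mono interior_subset) (hgo _ isOpen_interior) ⟨z, hz, rfl⟩

lemma IsOpen.frontier_connectedComponentIn_subset [LocallyConnectedSpace X] {O : Set X}
    (hO : IsOpen O) (x : X) : frontier (connectedComponentIn O x) ⊆ frontier O := by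
  intro y hy
  rw [hO.connectedComponentIn.frontier_eq] at hy
  rw [hO.frontier_eq]
  refine ⟨closure_mono (connectedComponentIn_subset O x) hy.1, fun hyO => hy.2 ?_⟩
  obtain ⟨w, hwy, hwx⟩ := mem_closure_iff.1 hy.1 _ hO.connectedComponentIn
    (mem_connectedComponentIn hyO)
  rw [connectedComponentIn_eq hwx, ← connectedComponentIn_eq hwy]
  exact mem_connectedComponentIn hyO

lemma IsOpen.subset_connectedComponentIn_of_frontier_subset [LocallyConnectedSpace X]
    [PreconnectedSpace X] {W O : Set X} {z₀ : X} (hW : IsOpen W) (hO : IsOpen O)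
    (hOne : O ≠ univ) (hOW : O ⊆ W) (hfr : frontier O ⊆ connectedComponentIn W z₀) :
    O ⊆ connectedComponentIn W z₀ := by
  intro x hx
  set O₀ := connectedComponentIn O x
  obtain ⟨q, hq⟩ : (frontier O₀).Nonempty := nonempty_frontier_iff.2
    ⟨⟨x, mem_connectedComponentIn hx⟩,
      fun h => hOne (eq_univ_of_univ_subset (h ▸ connectedComponentIn_subset O x))⟩
  obtain ⟨w, hwV, hwO₀⟩ := mem_closure_iff.1 hq.1 _ hW.connectedComponentIn
    (hfr (hO.frontier_connectedComponentIn_subset x hq))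
  have hO₀ : O₀ ⊆ connectedComponentIn W w :=
    isPreconnected_connectedComponentIn.subset_connectedComponentIn hwO₀
      ((connectedComponentIn_subset O x).trans hOW)
  rw [← connectedComponentIn_eq hwV] at hO₀
  exact hO₀ (mem_connectedComponentIn hx)

lemma exists_isClopen_mem_subset_of_connectedComponent_subset [T2Space X] [CompactSpace X]
    {x : X} {U : Set X} (hU : IsOpen U) (hxU : connectedComponent x ⊆ U) :
    ∃ Z, IsClopen Z ∧ x ∈ Z ∧ Z ⊆ U := by
  have hempty : Uᶜ ∩ ⋂ Z : {Z : Set X // IsClopen Z ∧ x ∈ Z}, (Z : Set X) = ∅ := by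
    rw [← connectedComponent_eq_iInter_isClopen, ← disjoint_iff_inter_eq_empty]
    exact disjoint_compl_left.mono_right hxU
  obtain ⟨t, ht⟩ := hU.isClosed_compl.isCompact.elim_finite_subfamily_closed _
    (fun Z => Z.2.1.isClosed) hempty
  refine ⟨⋂ Z ∈ t, (Z : Set X), isClopen_biInter_finset fun Z _ => Z.2.1,
    mem_iInter₂.2 fun Z _ => Z.2.2, fun y hy => ?_⟩
  by_contra hyU
  exact eq_empty_iff_forall_notMem.1 ht y ⟨hyU, hy⟩

end Topology

lemma disjoint_frontier_thickening {X : Type*} [PseudoMetricSpace X] {E E' : Set X} {δ ε : ℝ}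
    (hε : 0 < ε) (hεδ : ε ≤ δ) (hδ : Disjoint (cthickening δ E) E') :
    Disjoint (frontier (thickening ε E)) (E ∪ E') := by
  rw [isOpen_thickening.frontier_eq, disjoint_left]
  rintro y ⟨hyc, hyt⟩ (hyE | hyE')
  · exact hyt (self_subset_thickening hε E hyE)
  · exact disjoint_left.1 hδ
      (cthickening_mono hεδ E (closure_thickening_subset_cthickening ε E hyc)) hyE'

/-- A form of the Šura-Bura theorem. With `closedBall x r` containing the component of `x` in `C`,
that component is cut out of the compact set `C ∩ closedBall x (r + 2)` by a clopen set
`Z ⊆ ball x (r + 1)`; a thin thickening of `Z` is the required `O`. -/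
lemma exists_isOpen_isBounded_frontier_disjoint {X : Type*} [MetricSpace X] [ProperSpace X]
    {C : Set X} (hC : IsClosed C) {x : X} (hx : x ∈ C)
    (hD : IsBounded (connectedComponentIn C x)) :
    ∃ O, IsOpen O ∧ IsBounded O ∧ x ∈ O ∧ Disjoint (frontier O) C := by
  obtain ⟨r, hr⟩ := hD.subset_closedBall x
  set K := C ∩ closedBall x (r + 2)
  have hxK : x ∈ K := ⟨hx, mem_closedBall_self (by
    linarith [dist_nonneg.trans (hr (mem_connectedComponentIn hx))])⟩
  have : CompactSpace K := isCompact_iff_compactSpace.1 ((isCompact_closedBall x _).inter_left hC)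
  have hcomp : Subtype.val '' connectedComponent (⟨x, hxK⟩ : K) ⊆ closedBall x r := by
    rw [← connectedComponentIn_eq_image hxK]
    exact (connectedComponentIn_mono x inter_subset_left).trans hr
  obtain ⟨Z, hZ, hxZ, hZU⟩ := exists_isClopen_mem_subset_of_connectedComponent_subset
    (isOpen_ball.preimage continuous_subtype_val : IsOpen (Subtype.val ⁻¹' ball x (r + 1)))
    (image_subset_iff.1 (hcomp.trans (closedBall_subset_ball (by linarith))))
  set E := Subtype.val '' Z
  have hEc : IsCompact E := hZ.isClosed.isCompact.image continuous_subtype_val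
  have hEE' : Disjoint E (Subtype.val '' Zᶜ) :=
    (disjoint_image_iff Subtype.val_injective).2 disjoint_compl_right
  obtain ⟨δ, hδ, hδE⟩ := hEE'.exists_cthickenings hEc
    (hZ.compl.isClosed.isCompact.image continuous_subtype_val).isClosed
  set ε := min δ 1
  have hε : 0 < ε := lt_min hδ one_pos
  have hEball : cthickening ε E ⊆ closedBall x (r + 2) := by
    rw [hEc.cthickening_eq_biUnion_closedBall hε.le]
    exact iUnion₂_subset fun e he => closedBall_subset_closedBall' (by
      obtain ⟨e, he, rfl⟩ := he
      linarith [min_le_right δ 1, mem_ball.1 (hZU he)])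
  have hfr := disjoint_frontier_thickening hε (min_le_left δ 1)
    (hδE.mono_right (self_subset_cthickening _))
  rw [← image_union, union_compl_self, image_univ, Subtype.range_coe] at hfr
  refine ⟨thickening ε E, isOpen_thickening, isBounded_closedBall.subset
    ((thickening_subset_cthickening ε E).trans hEball),
    self_subset_thickening hε E ⟨⟨x, hxK⟩, hxZ, rfl⟩, disjoint_left.2 fun y hy hyC => ?_⟩
  exact disjoint_left.1 hfr hy
    ⟨hyC, hEball (closure_thickening_subset_cthickening ε E (frontier_subset_closure hy))⟩

lemma infty_mem_closure_image_coe {X : Type*} [PseudoMetricSpace X] {D : Set X}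
    (hD : ¬ IsBounded D) : (∞ : OnePoint X) ∈ closure ((↑) '' D) := by
  rw [mem_closure_iff_nhds_basis OnePoint.hasBasis_nhds_infty]
  rintro K ⟨-, hK⟩
  obtain ⟨d, hdD, hdK⟩ := not_subset.1 fun h => hD (hK.isBounded.subset h)
  exact ⟨d, ⟨d, hdD, rfl⟩, Or.inl ⟨d, hdK, rfl⟩⟩

lemma simplyConnectedDomain_of_forall_not_isBounded {V : Set ℂ}
    (h : ∀ x ∉ V, ¬ IsBounded (connectedComponentIn Vᶜ x)) : SimplyConnectedDomain V := by
  have hinfty : (∞ : OnePoint ℂ) ∉ (↑) '' V := fun ⟨_, _, h⟩ => OnePoint.coe_ne_infty _ h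
  refine ⟨⟨_, hinfty⟩, isPreconnected_of_forall ∞ fun y hy => ?_⟩
  induction y using OnePoint.rec with
  | infty => exact ⟨{∞}, singleton_subset_iff.2 hinfty, rfl, rfl, isPreconnected_singleton⟩
  | coe z =>
    have hz : z ∉ V := fun hz => hy ⟨z, hz, rfl⟩
    set D := connectedComponentIn Vᶜ z
    refine ⟨insert ∞ ((↑) '' D), insert_subset hinfty ?_, mem_insert _ _,
      mem_insert_of_mem _ ⟨z, mem_connectedComponentIn hz, rfl⟩, ?_⟩
    · rintro _ ⟨w, hw, rfl⟩ ⟨w', hw', hww'⟩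
      exact connectedComponentIn_subset _ _ hw (OnePoint.coe_injective hww' ▸ hw')
    · exact (isPreconnected_connectedComponentIn.image _
        OnePoint.continuous_coe.continuousOn).subset_closure (subset_insert _ _)
        (insert_subset (infty_mem_closure_image_coe (h z hz)) subset_closure)

section UniformCauchy

variable {ι α β : Type*} [UniformSpace β] {F : ι → α → β} {s t : Set α}

lemma UniformCauchySeqOn.union {p : Filter ι} (hs : UniformCauchySeqOn F p s)
    (ht : UniformCauchySeqOn F p t) : UniformCauchySeqOn F p (s ∪ t) := fun u hu =>
  ((hs u hu).and (ht u hu)).mono fun _ hm x hx => hx.elim (hm.1 x) (hm.2 x)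

lemma UniformCauchySeqOn.comp_tendsto {κ : Type*} {p : Filter ι} {q : Filter κ} {φ : κ → ι}
    (h : UniformCauchySeqOn F p s) (hφ : Tendsto φ q p) :
    UniformCauchySeqOn (fun n => F (φ n)) q s := fun u hu =>
  (hφ.prodMap hφ).eventually (h u hu)

lemma UniformCauchySeqOn.exists_tendstoUniformlyOn [CompleteSpace β] [Nonempty β] [Nonempty ι]
    [SemilatticeSup ι] (h : UniformCauchySeqOn F atTop s) :
    ∃ H : α → β, TendstoUniformlyOn F H atTop s :=
  ⟨fun x => limUnder atTop fun n => F n x, h.tendstoUniformlyOn_of_tendsto fun _ hx =>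
    tendsto_nhds_limUnder (cauchySeq_tendsto_of_complete (h.cauchySeq hx))⟩

lemma UniformCauchySeqOn.exists_eventually_norm_le {E : Type*} [TopologicalSpace α]
    [SeminormedAddCommGroup E] {S : ℕ → α → E} {K : Set α} (hK : IsCompact K)
    (hS : ∀ n, ContinuousOn (S n) K) (h : UniformCauchySeqOn S atTop K) :
    ∃ C, ∀ᶠ n in atTop, ∀ z ∈ K, ‖S n z‖ ≤ C := by
  obtain ⟨N, hN⟩ := Metric.uniformCauchySeqOn_iff.1 h 1 one_pos
  obtain ⟨C, hC⟩ := hK.exists_bound_of_continuousOn (hS N)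
  refine ⟨C + 1, eventually_atTop.2 ⟨N, fun n hn z hz => ?_⟩⟩
  have := hN n hn N le_rfl z hz
  rw [dist_eq_norm] at this
  linarith [norm_le_insert' (S n z) (S N z), hC z hz]

end UniformCauchy

section MaximumModulus

variable {O : Set ℂ}

lemma le_norm_of_forall_mem_frontier_le_norm (hO : IsBounded O) {g : ℂ → ℂ}
    (hg : Differentiable ℂ g) (hg0 : ∀ z ∈ closure O, g z ≠ 0) {R : ℝ}
    (hR : ∀ z ∈ frontier O, R ≤ ‖g z‖) {z : ℂ} (hz : z ∈ closure O) : R ≤ ‖g z‖ := by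
  rcases le_or_gt R 0 with hR0 | hR0
  · exact hR0.trans (norm_nonneg _)
  have h := Complex.norm_le_of_forall_mem_frontier_norm_le hO (hg.diffContOnCl.inv hg0)
    (C := R⁻¹) (fun w hw => by rw [Pi.inv_apply, norm_inv]; exact inv_anti₀ hR0 (hR w hw)) hz
  rw [Pi.inv_apply, norm_inv] at h
  exact (inv_le_inv₀ (norm_pos_iff.2 (hg0 z hz)) hR0).1 h

lemma mem_image_closure_of_forall_mem_frontier_le_norm (hO : IsBounded O) {g : ℂ → ℂ}
    (hg : Differentiable ℂ g) {p : ℂ} (hp : p ∈ closure O) (hp0 : g p = 0) {R : ℝ}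
    (hR : ∀ z ∈ frontier O, R ≤ ‖g z‖) {w : ℂ} (hw : 2 * ‖w‖ < R) : w ∈ g '' closure O := by
  by_contra hw'
  have h := le_norm_of_forall_mem_frontier_le_norm hO (hg.sub_const w)
    (fun z hz h => hw' ⟨z, hz, sub_eq_zero.1 h⟩) (R := R - ‖w‖)
    (fun z hz => by linarith [hR z hz, norm_sub_norm_le (g z) w]) hp
  rw [hp0, zero_sub, norm_neg] at h
  linarith

lemma UniformCauchySeqOn.closure_of_frontier (hO : IsBounded O) {S : ℕ → ℂ → ℂ}
    (hS : ∀ n, Differentiable ℂ (S n)) (h : UniformCauchySeqOn S atTop (frontier O)) :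
    UniformCauchySeqOn S atTop (closure O) := by
  rw [Metric.uniformCauchySeqOn_iff] at h ⊢
  intro ε hε
  obtain ⟨N, hN⟩ := h (ε / 2) (half_pos hε)
  refine ⟨N, fun m hm n hn z hz => ?_⟩
  rw [dist_eq_norm]
  have := Complex.norm_le_of_forall_mem_frontier_norm_le hO ((hS m).sub (hS n)).diffContOnCl
    (fun w hw => (dist_eq_norm (S m w) (S n w) ▸ hN m hm n hn w hw).le) hz
  rw [Pi.sub_apply] at this
  linarith

end MaximumModulus

section FatouSet

variable {F : Set (ℂ → ℂ)} {s : ℕ → ℂ → ℂ}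

lemma isOpen_fatou (F : Set (ℂ → ℂ)) : IsOpen (fatou F) :=
  isOpen_iff_forall_mem_open.2 fun _ ⟨U, hUo, hzU, hN⟩ =>
    ⟨U, fun _ hy => ⟨U, hUo, hy, hN⟩, hUo, hzU⟩

lemma NormalOn.mono {U U' : Set ℂ} (hN : NormalOn F U) (hU' : U' ⊆ U) : NormalOn F U' := by
  intro s hs
  obtain ⟨φ, hφ, hconv | hdiv⟩ := hN s hs
  · obtain ⟨h, hh⟩ := hconv
    exact ⟨φ, hφ, Or.inl ⟨h, hh.mono hU'⟩⟩
  · exact ⟨φ, hφ, Or.inr fun K hK => hdiv K (hK.trans hU')⟩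

lemma exists_isCompact_mem_nhds_normalOn {x : ℂ} (hx : x ∈ fatou F) :
    ∃ K ∈ 𝓝 x, IsCompact K ∧ NormalOn F K := by
  obtain ⟨U, hUo, hxU, hN⟩ := hx
  obtain ⟨K, hK, hKU, hKc⟩ := local_compact_nhds (hUo.mem_nhds hxU)
  exact ⟨K, hK, hKc, hN.mono hKU⟩

lemma exists_strictMono_norm_le_of_not_tendsto {E : Type*} [Norm E] {u : ℕ → E}
    (h : ¬ Tendsto (fun n => ‖u n‖) atTop atTop) :
    ∃ φ : ℕ → ℕ, StrictMono φ ∧ ∃ C, ∀ n, ‖u (φ n)‖ ≤ C := by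
  rw [Filter.tendsto_atTop] at h
  push Not at h
  obtain ⟨C, hC⟩ := h
  obtain ⟨φ, hφ, hφC⟩ := extraction_of_frequently_atTop hC
  exact ⟨φ, hφ, C, fun n => (hφC n).le⟩

lemma not_tendsto_norm_atTop_of_le {E : Type*} [Norm E] {u : ℕ → E} {C : ℝ}
    (h : ∀ n, ‖u n‖ ≤ C) : ¬ Tendsto (fun n => ‖u n‖) atTop atTop := fun hu =>
  let ⟨n, hn⟩ := (Filter.tendsto_atTop.1 hu (C + 1)).exists
  by linarith [h n]

lemma NormalOn.eventually_forall_le_norm {K : Set ℂ} (hN : NormalOn F K) (hK : IsCompact K)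
    (hs : ∀ n, s n ∈ F) {x : ℂ} (hx : x ∈ K) (hdiv : Tendsto (fun n => ‖s n x‖) atTop atTop)
    (M : ℝ) : ∀ᶠ n in atTop, ∀ z ∈ K, M ≤ ‖s n z‖ := by
  suffices Tendsto id atTop (𝓟 {n | ∀ z ∈ K, M ≤ ‖s n z‖}) from tendsto_principal.1 this
  refine tendsto_of_subseq_tendsto fun ns hns => ?_
  obtain ⟨φ, hφ, ⟨h, hconv⟩ | hdivK⟩ := hN (fun n => s (ns n)) fun n => hs _
  · exact absurd (hconv.tendsto_at hx).norm
      (not_tendsto_nhds_of_tendsto_atTop (hdiv.comp (hns.comp hφ.tendsto_atTop)) _)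
  · exact ⟨φ, tendsto_principal.2 (hdivK K subset_rfl hK M)⟩

lemma NormalOn.tendsto_norm_atTop {U : Set ℂ} (hN : NormalOn F U) (hs : ∀ n, s n ∈ F)
    {x y : ℂ} (hx : x ∈ U) (hy : y ∈ U) (hdiv : Tendsto (fun n => ‖s n x‖) atTop atTop) :
    Tendsto (fun n => ‖s n y‖) atTop atTop :=
  Filter.tendsto_atTop.2 fun M =>
    ((hN.mono (pair_subset hx hy)).eventually_forall_le_norm (toFinite _).isCompact hs
      (mem_insert x _) hdiv M).mono fun _ hn => hn y (mem_insert_of_mem x rfl)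

lemma NormalOn.exists_tendstoLocallyUniformlyOn {U : Set ℂ} (hN : NormalOn F U)
    (hs : ∀ n, s n ∈ F) {x : ℂ} (hx : x ∈ U) {C : ℝ} (hC : ∀ n, ‖s n x‖ ≤ C) :
    ∃ φ : ℕ → ℕ, StrictMono φ ∧
      ∃ h : ℂ → ℂ, TendstoLocallyUniformlyOn (fun n => s (φ n)) h atTop U := by
  obtain ⟨φ, hφ, hconv | hdiv⟩ := hN s hs
  · exact ⟨φ, hφ, hconv⟩
  · obtain ⟨n, hn⟩ := (hdiv {x} (singleton_subset_iff.2 hx) isCompact_singleton (C + 1)).exists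
    linarith [hn x rfl, hC (φ n)]

variable {V : Set ℂ}

lemma tendsto_norm_atTop_iff_of_subset_fatou (hV : IsPreconnected V) (hVF : V ⊆ fatou F)
    (hs : ∀ n, s n ∈ F) {x y : ℂ} (hx : x ∈ V) (hy : y ∈ V) :
    Tendsto (fun n => ‖s n x‖) atTop atTop ↔ Tendsto (fun n => ‖s n y‖) atTop atTop := by
  refine hV.induction₂' (fun a b => Tendsto (fun n => ‖s n a‖) atTop atTop ↔
    Tendsto (fun n => ‖s n b‖) atTop atTop) (fun x hx => ?_) (fun _ _ _ _ _ _ => Iff.trans) hx hy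
  obtain ⟨K, hK, -, hN⟩ := exists_isCompact_mem_nhds_normalOn (hVF hx)
  filter_upwards [mem_nhdsWithin_of_mem_nhds hK] with y hyK
  have hxK := mem_of_mem_nhds hK
  exact ⟨⟨hN.tendsto_norm_atTop hs hxK hyK, hN.tendsto_norm_atTop hs hyK hxK⟩,
    ⟨hN.tendsto_norm_atTop hs hyK hxK, hN.tendsto_norm_atTop hs hxK hyK⟩⟩

lemma eventually_forall_le_norm_of_subset_fatou (hVF : V ⊆ fatou F) (hs : ∀ n, s n ∈ F)
    (hdiv : ∀ x ∈ V, Tendsto (fun n => ‖s n x‖) atTop atTop) {K : Set ℂ} (hK : IsCompact K)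
    (hKV : K ⊆ V) (M : ℝ) : ∀ᶠ n in atTop, ∀ z ∈ K, M ≤ ‖s n z‖ := by
  refine hK.induction_on (p := fun A => ∀ᶠ n in atTop, ∀ z ∈ A, M ≤ ‖s n z‖)
    (by simp) (fun A B hAB hB => hB.mono fun n hn z hz => hn z (hAB hz))
    (fun A B hA hB => (hA.and hB).mono fun n hn z hz => hz.elim (hn.1 z) (hn.2 z))
    fun x hx => ?_
  obtain ⟨B, hB, hBc, hN⟩ := exists_isCompact_mem_nhds_normalOn (hVF (hKV hx))
  exact ⟨B, mem_nhdsWithin_of_mem_nhds hB,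
    hN.eventually_forall_le_norm hBc hs (mem_of_mem_nhds hB) (hdiv x (hKV hx)) M⟩

lemma exists_uniformCauchySeqOn_of_subset_fatou (hV : IsPreconnected V) (hVF : V ⊆ fatou F)
    {x₀ : ℂ} (hx₀ : x₀ ∈ V) {C : ℝ} {K : Set ℂ} (hK : IsCompact K) (hKV : K ⊆ V) :
    ∀ s : ℕ → ℂ → ℂ, (∀ n, s n ∈ F) → (∀ n, ‖s n x₀‖ ≤ C) →
      ∃ φ : ℕ → ℕ, StrictMono φ ∧ UniformCauchySeqOn (fun n => s (φ n)) atTop K := by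
  refine hK.induction_on (p := fun A => ∀ s : ℕ → ℂ → ℂ, (∀ n, s n ∈ F) → (∀ n, ‖s n x₀‖ ≤ C) →
      ∃ φ : ℕ → ℕ, StrictMono φ ∧ UniformCauchySeqOn (fun n => s (φ n)) atTop A)
    (fun s _ _ => ⟨id, strictMono_id, fun _ _ => Eventually.of_forall fun _ _ h => h.elim⟩)
    (fun A B hAB hB s hs hC => let ⟨φ, hφ, h⟩ := hB s hs hC; ⟨φ, hφ, h.mono hAB⟩)
    (fun A B hA hB s hs hC => ?_) fun x hx => ?_
  · obtain ⟨φ, hφ, hφA⟩ := hA s hs hC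
    obtain ⟨ψ, hψ, hψB⟩ := hB (fun n => s (φ n)) (fun n => hs _) fun n => hC _
    exact ⟨φ ∘ ψ, hφ.comp hψ, (hφA.comp_tendsto hψ.tendsto_atTop).union hψB⟩
  obtain ⟨B, hB, hBc, hN⟩ := exists_isCompact_mem_nhds_normalOn (hVF (hKV hx))
  refine ⟨B, mem_nhdsWithin_of_mem_nhds hB, fun s hs hC => ?_⟩
  have hx_div : ¬ Tendsto (fun n => ‖s n x‖) atTop atTop := fun h =>
    not_tendsto_norm_atTop_of_le hC
      ((tendsto_norm_atTop_iff_of_subset_fatou hV hVF hs (hKV hx) hx₀).1 h)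
  obtain ⟨σ, hσ, C', hC'⟩ := exists_strictMono_norm_le_of_not_tendsto hx_div
  obtain ⟨φ, hφ, h, hconv⟩ :=
    hN.exists_tendstoLocallyUniformlyOn (fun n => hs _) (mem_of_mem_nhds hB) hC'
  exact ⟨σ ∘ φ, hσ.comp hφ,
    ((tendstoLocallyUniformlyOn_iff_tendstoUniformlyOn_of_compact hBc).1 hconv).uniformCauchySeqOn⟩

end FatouSet

section Normality

variable {F : Set (ℂ → ℂ)} {V O : Set ℂ} {s : ℕ → ℂ → ℂ}

lemma Bornology.IsBounded.isCompact_frontier (hO : IsBounded O) : IsCompact (frontier O) :=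
  hO.isCompact_closure.of_isClosed_subset isClosed_frontier frontier_subset_closure

lemma exists_uniformCauchySeqOn_closure (hFd : ∀ g ∈ F, Differentiable ℂ g)
    (hV : IsPreconnected V) (hVF : V ⊆ fatou F) (hO : IsBounded O) (hOV : frontier O ⊆ V)
    (hs : ∀ n, s n ∈ F) {x₀ : ℂ} (hx₀ : x₀ ∈ V) {C : ℝ} (hC : ∀ n, ‖s n x₀‖ ≤ C) :
    ∃ φ : ℕ → ℕ, StrictMono φ ∧ UniformCauchySeqOn (fun n => s (φ n)) atTop (closure O) := by
  obtain ⟨φ, hφ, h⟩ := exists_uniformCauchySeqOn_of_subset_fatou hV hVF hx₀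
    hO.isCompact_frontier hOV s hs hC
  exact ⟨φ, hφ, h.closure_of_frontier hO fun n => hFd _ (hs _)⟩

lemma eventually_mem_image_closure (hO : IsBounded O) {t : ℕ → ℂ → ℂ}
    (htd : ∀ n, Differentiable ℂ (t n)) (ht0 : ∀ n, ∃ p ∈ closure O, t n p = 0)
    (hfr : ∀ M, ∀ᶠ n in atTop, ∀ z ∈ frontier O, M ≤ ‖t n z‖) (w : ℂ) :
    ∀ᶠ n in atTop, w ∈ t n '' closure O := by
  filter_upwards [hfr (2 * ‖w‖ + 1)] with n hn
  obtain ⟨p, hp, hp0⟩ := ht0 n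
  exact mem_image_closure_of_forall_mem_frontier_le_norm hO (htd n) hp hp0 hn (by linarith)

lemma exists_mem_frontier_apply_mem {g : ℂ → ℂ} (hgc : Continuous g) (hgo : IsOpenMap g)
    (hO : IsBounded O) {P : Set ℂ} (hP : IsPreconnected P) (hPb : ¬ IsBounded P) {w : ℂ}
    (hwP : w ∈ P) (hw : w ∈ g '' closure O) : ∃ z ∈ frontier O, g z ∈ P := by
  have himg := hO.isCompact_closure.image hgc
  obtain ⟨_, hyP, hyfr⟩ := hP.inter_frontier_nonempty himg.isClosed ⟨w, hwP, hw⟩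
    fun hPO => hPb (himg.isBounded.subset hPO)
  obtain ⟨z, hz, rfl⟩ := hgo.frontier_image_subset hgc hO.isCompact_closure hyfr
  exact ⟨z, frontier_closure_subset hz, hyP⟩

/-- If `s n` had zeros in `closure O`, it would cover ever larger discs from `closure O`. Then
`g₀ ∘ s n` either stays bounded on `closure O` along a subsequence, contradicting that `g₀` is
unbounded, or diverges on `frontier O`, contradicting that `s n (frontier O)` meets the set `P`
on which `g₀` is bounded. -/
lemma eventually_forall_ne_zero (hF : ∀ g ∈ F, Differentiable ℂ g ∧ IsOpenMap g)
    {g₀ : ℂ → ℂ} (hg₀ : ¬ IsBounded (range g₀)) (hg₀F : ∀ g ∈ F, g₀ ∘ g ∈ F) {P : Set ℂ}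
    (hP : IsPreconnected P) (hPb : ¬ IsBounded P) (hg₀P : IsBounded (g₀ '' P))
    (hV : IsPreconnected V) (hVF : V ⊆ fatou F) (hO : IsBounded O) (hOV : frontier O ⊆ V)
    (hs : ∀ n, s n ∈ F) (hdiv : ∀ x ∈ V, Tendsto (fun n => ‖s n x‖) atTop atTop) :
    ∀ᶠ n in atTop, ∀ z ∈ closure O, s n z ≠ 0 := by
  by_contra h
  rw [not_eventually] at h
  obtain ⟨ζ, hζ, hζ0⟩ :=
    extraction_of_frequently_atTop (h.mono fun n hn => by push Not at hn; exact hn)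
  set t := fun n => s (ζ n)
  have ht : ∀ n, t n ∈ F := fun n => hs _
  have htd : ∀ n, Differentiable ℂ (t n) := fun n => (hF _ (ht n)).1
  have hcover := eventually_mem_image_closure hO htd hζ0
    (eventually_forall_le_norm_of_subset_fatou hVF ht
      (fun x hx => (hdiv x hx).comp hζ.tendsto_atTop) hO.isCompact_frontier hOV)
  have hu : ∀ n, g₀ ∘ t n ∈ F := fun n => hg₀F _ (ht n)
  by_cases hudiv : ∀ x ∈ V, Tendsto (fun n => ‖(g₀ ∘ t n) x‖) atTop atTop
  · obtain ⟨M, hM⟩ := isBounded_iff_forall_norm_le.1 hg₀P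
    obtain ⟨w, hwP⟩ := nonempty_of_not_isBounded hPb
    obtain ⟨n, hn, hwn⟩ := (eventually_forall_le_norm_of_subset_fatou hVF hu hudiv
      hO.isCompact_frontier hOV (M + 1) |>.and (hcover w)).exists
    obtain ⟨z, hz, hzP⟩ := exists_mem_frontier_apply_mem (htd n).continuous (hF _ (ht n)).2
      hO hP hPb hwP hwn
    have hlarge : M + 1 ≤ ‖g₀ (t n z)‖ := hn z hz
    linarith [hM _ ⟨_, hzP, rfl⟩]
  · push Not at hudiv
    obtain ⟨x₁, hx₁, hx₁div⟩ := hudiv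
    obtain ⟨σ, hσ, C, hC⟩ := exists_strictMono_norm_le_of_not_tendsto hx₁div
    obtain ⟨φ, hφ, hcauchy⟩ := exists_uniformCauchySeqOn_closure (fun g hg => (hF g hg).1)
      hV hVF hO hOV (fun n => hu (σ n)) hx₁ hC
    obtain ⟨C', hC'⟩ := hcauchy.exists_eventually_norm_le hO.isCompact_closure
      fun n => (hF _ (hu _)).1.continuous.continuousOn
    obtain ⟨w, hw⟩ : ∃ w, C' < ‖g₀ w‖ := by
      simp only [isBounded_iff_forall_norm_le, forall_mem_range, not_exists] at hg₀
      simpa using hg₀ C'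
    obtain ⟨n, hn, z, hz, hzw⟩ :=
      (hC'.and ((hσ.comp hφ).tendsto_atTop.eventually (hcover w))).exists
    have hsmall : ‖g₀ (t ((σ ∘ φ) n) z)‖ ≤ C' := hn z hz
    rw [hzw] at hsmall
    linarith

theorem normalOn_of_frontier_subset (hF : ∀ g ∈ F, Differentiable ℂ g ∧ IsOpenMap g)
    {g₀ : ℂ → ℂ} (hg₀ : ¬ IsBounded (range g₀)) (hg₀F : ∀ g ∈ F, g₀ ∘ g ∈ F) {P : Set ℂ}
    (hP : IsPreconnected P) (hPb : ¬ IsBounded P) (hg₀P : IsBounded (g₀ '' P))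
    (hV : IsPreconnected V) (hVF : V ⊆ fatou F) (hO : IsBounded O) (hOV : frontier O ⊆ V) :
    NormalOn F O := by
  intro s hs
  by_cases hdiv : ∀ x ∈ V, Tendsto (fun n => ‖s n x‖) atTop atTop
  · refine ⟨id, strictMono_id, Or.inr fun K hKO _ M => ?_⟩
    filter_upwards [eventually_forall_le_norm_of_subset_fatou hVF hs hdiv hO.isCompact_frontier
      hOV M, eventually_forall_ne_zero hF hg₀ hg₀F hP hPb hg₀P hV hVF hO hOV hs hdiv]
      with n hn hn0 z hz
    exact le_norm_of_forall_mem_frontier_le_norm hO (hF _ (hs n)).1 hn0 hn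
      (subset_closure (hKO hz))
  · push Not at hdiv
    obtain ⟨x₀, hx₀, hx₀div⟩ := hdiv
    obtain ⟨σ, hσ, C, hC⟩ := exists_strictMono_norm_le_of_not_tendsto hx₀div
    obtain ⟨φ, hφ, hcauchy⟩ := exists_uniformCauchySeqOn_closure (fun g hg => (hF g hg).1)
      hV hVF hO hOV (fun n => hs (σ n)) hx₀ hC
    obtain ⟨h, hh⟩ := hcauchy.exists_tendstoUniformlyOn
    exact ⟨σ ∘ φ, hσ.comp hφ, Or.inl ⟨h, (hh.mono subset_closure).tendstoLocallyUniformlyOn⟩⟩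

end Normality

/-- if `G = [f₁, f₂, …]` is a transcendental semigroup bounded on some
curve `Γ` going to `∞` (every generator is bounded on `Γ`), then every connected
component of `F(G)` is simply connected. -/
theorem stmt2 (f : ℕ → ℂ → ℂ) (hf : ∀ i, TranscendentalEntire (f i))
    (Γ : ℝ → ℂ) (hΓcont : ContinuousOn Γ (Ici 0))
    (hΓinf : Tendsto (fun t => ‖Γ t‖) atTop atTop)
    (hbd : ∀ i, ∃ M : ℝ, ∀ t ∈ Ici (0:ℝ), ‖f i (Γ t)‖ ≤ M) :
    ∀ V, IsComponentOf V (fatou (semigroupGen (Set.range f))) →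
      SimplyConnectedDomain V := by
  rintro V ⟨z₀, -, rfl⟩
  set G := semigroupGen (Set.range f)
  have hG (g) (hg : g ∈ G) : Differentiable ℂ g ∧ IsOpenMap g :=
    differentiable_and_isOpenMap_of_mem_semigroupGen (by rintro _ ⟨i, rfl⟩; exact hf i) hg
  have hΓb : ¬ IsBounded (Γ '' Ici 0) := fun h => by
    obtain ⟨R, hR⟩ := isBounded_iff_forall_norm_le.1 h
    obtain ⟨t, ht, ht0⟩ := ((hΓinf.eventually_gt_atTop R).and (eventually_ge_atTop 0)).exists
    exact absurd (hR _ ⟨t, ht0, rfl⟩) (not_le.2 ht)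
  obtain ⟨M, hM⟩ := hbd 0
  have hf₀Γ : IsBounded (f 0 '' (Γ '' Ici 0)) :=
    isBounded_iff_forall_norm_le.2 ⟨M, by rintro _ ⟨_, ⟨t, ht, rfl⟩, rfl⟩; exact hM t ht⟩
  apply simplyConnectedDomain_of_forall_not_isBounded
  intro x hx hbdd
  obtain ⟨O, hOo, hOb, hxO, hOV⟩ := exists_isOpen_isBounded_frontier_disjoint
    (isOpen_fatou G).connectedComponentIn.isClosed_compl hx hbdd
  rw [disjoint_compl_right_iff_subset] at hOV
  have hN : NormalOn G O := normalOn_of_frontier_subset hG (hf 0).not_isBounded_range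
    (fun g hg => InSemigroup.comp (.base ⟨0, rfl⟩) hg) (isPreconnected_Ici.image Γ hΓcont) hΓb
    hf₀Γ isPreconnected_connectedComponentIn (connectedComponentIn_subset _ _) hOb hOV
  exact hx ((isOpen_fatou G).subset_connectedComponentIn_of_frontier_subset hOo
    (fun h => NormedSpace.unbounded_univ ℂ ℂ (h ▸ hOb)) (fun y hy => ⟨O, hOo, hy, hN⟩) hOV hxO)
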